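/- Let T ≥ 1, let 𝒳_0, …, 𝒳_T be nonempty finite sets, for each t ∈ {1,…,T} let P_t : 𝒳_t × 𝒳_{t−1} → ℝ be a Markov kernel. Let α > 0 and r : 𝒳_0 → ℝ, and define value functions v_0(x) = exp(r(x)/α) and v_t(x) = Σ_{y∈𝒳_{t−1}} P_t(x,y)·v_{t−1}(y) for t = 1,…,T, and optimal kernels P*_t(x,y) = P_t(x,y)·v_{t−1}(y)/v_t(x). Then for every trajectory (x_T, x_{T−1}, …, x_0) ∈ 𝒳_T × ⋯ × 𝒳_0, the product telescopes: ∏_{t=1}^{T} P*_t(x_t, x_{t−1}) = (∏_{t=1}^{T} P_t(x_t, x_{t−1})) · exp(r(x_0)/α) / v_T(x_T). Consequently, if p_T is a probability distribution on 𝒳_T and Z_T = Σ_{x∈𝒳_T} p_T(x)·v_T(x), the trajectory distribution started from p*_T(x) = p_T(x)·v_T(x)/Z_T under the optimal kernels equals the base trajectory distribution p_T(x_T)·∏_{t=1}^{T} P_t(x_t, x_{t−1}) reweighted by exp(r(x_0)/α)/Z_T. -/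

import Mathlib

/-!
The optimal kernel is `P*_t(x, y) = P_t(x, y) · v_{t-1}(y) / v_t(x)`, so along a trajectory the
product of the ratios `v_{t-1}(x_{t-1}) / v_t(x_t)` telescopes to `v_0(x_0) / v_T(x_T)`, with
`v_0(x_0) = exp(r(x_0)/α)`. The only analytic input is `v_t > 0`, which holds because a Markov
kernel averages positive values to a positive value. Multiplying by `p*_T(x_T)` cancels
`v_T(x_T)` and gives the reweighted base trajectory distribution.
-/

open Finset

theorem Finset.sum_mul_pos_of_sum_eq_one {ι : Type*} [Fintype ι] {p w : ι → ℝ}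
    (hp : ∀ i, 0 ≤ p i) (hp_sum : ∑ i, p i = 1) (hw : ∀ i, 0 < w i) :
    0 < ∑ i, p i * w i := by
  obtain ⟨i, -, hi⟩ : ∃ i ∈ univ, p i ≠ 0 :=
    exists_ne_zero_of_sum_ne_zero (by rw [hp_sum]; exact one_ne_zero)
  exact sum_pos' (fun j _ => mul_nonneg (hp j) (hw j).le)
    ⟨i, mem_univ i, mul_pos ((hp i).lt_of_ne' hi) (hw i)⟩

theorem value_pos_of_markov {X : ℕ → Type*} [∀ t, Fintype (X t)] {T : ℕ}
    {P : ∀ t, X (t + 1) → X t → ℝ} {v : ∀ t, X t → ℝ}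
    (hP_nonneg : ∀ t, t < T → ∀ x y, 0 ≤ P t x y)
    (hP_sum : ∀ t, t < T → ∀ x, ∑ y, P t x y = 1)
    (hv0 : ∀ x, 0 < v 0 x)
    (hv_rec : ∀ t, t < T → ∀ x, v (t + 1) x = ∑ y, P t x y * v t y) :
    ∀ t ≤ T, ∀ x, 0 < v t x := by
  intro t
  induction t with
  | zero => exact fun _ => hv0
  | succ t ih =>
    intro ht x
    rw [hv_rec t ht x]
    exact sum_mul_pos_of_sum_eq_one (hP_nonneg t ht x) (hP_sum t ht x)
      (ih (Nat.le_of_succ_le ht))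

theorem Fin.prod_div_castSucc_succ {K : Type*} [Field K] {n : ℕ} (f : Fin (n + 1) → K)
    (hf : ∀ i, f i ≠ 0) :
    ∏ i : Fin n, f i.castSucc / f i.succ = f 0 / f (Fin.last n) := by
  have hprod : ∏ i, f i = (∏ i : Fin n, f i.castSucc) * f (Fin.last n) :=
    Fin.prod_univ_castSucc f
  rw [Fin.prod_univ_succ] at hprod
  rw [prod_div_distrib, div_eq_div_iff (prod_ne_zero_iff.2 fun i _ => hf _) (hf _)]
  linear_combination hprod.symm

theorem Fin.prod_mul_div_castSucc_succ {K : Type*} [Field K] {n : ℕ} (a : Fin n → K)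
    (f : Fin (n + 1) → K) (hf : ∀ i, f i ≠ 0) :
    ∏ i : Fin n, a i * f i.castSucc / f i.succ = (∏ i, a i) * f 0 / f (Fin.last n) := by
  simp_rw [mul_div_assoc, prod_mul_distrib, Fin.prod_div_castSucc_succ f hf]

theorem optimal_kernel_trajectory_telescoping_general
    (T : ℕ) (X : ℕ → Type*) [∀ t, Fintype (X t)]
    (P : ∀ t, X (t + 1) → X t → ℝ)
    (hP_nonneg : ∀ t, t < T → ∀ x y, 0 ≤ P t x y)
    (hP_sum : ∀ t, t < T → ∀ x, ∑ y, P t x y = 1)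
    (α : ℝ) (r : X 0 → ℝ)
    (v : ∀ t, X t → ℝ)
    (hv0 : ∀ x, v 0 x = Real.exp (r x / α))
    (hv_rec : ∀ t, t < T → ∀ x, v (t + 1) x = ∑ y, P t x y * v t y)
    (pT : X T → ℝ) :
    ∀ g : (t : Fin (T + 1)) → X t,
      (∏ t : Fin T,
          P t (g t.succ) (g t.castSucc) * v t (g t.castSucc) / v (t + 1) (g t.succ))
        = (∏ t : Fin T, P t (g t.succ) (g t.castSucc)) *
            Real.exp (r (g ⟨0, Nat.succ_pos T⟩) / α) / v T (g (Fin.last T))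
      ∧ (pT (g (Fin.last T)) * v T (g (Fin.last T)) / (∑ x, pT x * v T x) *
            ∏ t : Fin T,
              P t (g t.succ) (g t.castSucc) * v t (g t.castSucc) / v (t + 1) (g t.succ))
          = (pT (g (Fin.last T)) * ∏ t : Fin T, P t (g t.succ) (g t.castSucc)) *
              (Real.exp (r (g ⟨0, Nat.succ_pos T⟩) / α) / ∑ x, pT x * v T x) := by
  intro g
  have hv_pos := value_pos_of_markov hP_nonneg hP_sum (fun x => hv0 x ▸ Real.exp_pos _) hv_rec
  have htelescope := Fin.prod_mul_div_castSucc_succ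
    (fun t : Fin T => P t (g t.succ) (g t.castSucc)) (fun i => v i (g i))
    (fun i => (hv_pos i (Nat.lt_succ_iff.1 i.2) _).ne')
  have hv0g : v (0 : Fin (T + 1)) (g 0) = Real.exp (r (g ⟨0, Nat.succ_pos T⟩) / α) := hv0 _
  simp only [Fin.val_castSucc, Fin.val_succ, Fin.val_last, hv0g] at htelescope
  have hvT := (hv_pos T le_rfl (g (Fin.last T))).ne'
  exact ⟨htelescope, by rw [htelescope]; field_simp⟩

/-- With kernels `P t : X (t+1) → X t → ℝ` (`t = 0,…,T-1`), value functions
`v 0 = exp(r/α)`, `v (t+1) x = Σ_y P t x y · v t y`, and optimal kernels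
`P*_t(x,y) = P t x y · v t y / v (t+1) x`, the product of the optimal kernels along any
trajectory telescopes:
`∏_t P*_t(x_t, x_{t-1}) = (∏_t P_t(x_t, x_{t-1})) · exp(r(x₀)/α) / v T (x_T)`.
Consequently, the trajectory distribution started from `p*_T(x) = p T x · v T x / Z T`
under the optimal kernels equals the base trajectory distribution reweighted by
`exp(r(x₀)/α)/Z_T`. -/
theorem optimal_kernel_trajectory_telescoping
    (T : ℕ) (hT : 1 ≤ T) (X : ℕ → Type*) [∀ t, Fintype (X t)] [∀ t, Nonempty (X t)]
    (P : ∀ t, X (t + 1) → X t → ℝ)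
    (hP_nonneg : ∀ t, t < T → ∀ x y, 0 ≤ P t x y)
    (hP_sum : ∀ t, t < T → ∀ x, ∑ y, P t x y = 1)
    (α : ℝ) (hα : 0 < α) (r : X 0 → ℝ)
    (v : ∀ t, X t → ℝ)
    (hv0 : ∀ x, v 0 x = Real.exp (r x / α))
    (hv_rec : ∀ t, t < T → ∀ x, v (t + 1) x = ∑ y, P t x y * v t y)
    (pT : X T → ℝ) (hpT_nonneg : ∀ x, 0 ≤ pT x) (hpT_sum : ∑ x, pT x = 1) :
    ∀ g : (t : Fin (T + 1)) → X t,
      (∏ t : Fin T,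
          P t (g t.succ) (g t.castSucc) * v t (g t.castSucc) / v (t + 1) (g t.succ))
        = (∏ t : Fin T, P t (g t.succ) (g t.castSucc)) *
            Real.exp (r (g ⟨0, Nat.succ_pos T⟩) / α) / v T (g (Fin.last T))
      ∧ (pT (g (Fin.last T)) * v T (g (Fin.last T)) / (∑ x, pT x * v T x) *
            ∏ t : Fin T,
              P t (g t.succ) (g t.castSucc) * v t (g t.castSucc) / v (t + 1) (g t.succ))
          = (pT (g (Fin.last T)) * ∏ t : Fin T, P t (g t.succ) (g t.castSucc)) *
              (Real.exp (r (g ⟨0, Nat.succ_pos T⟩) / α) / ∑ x, pT x * v T x) :=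
  optimal_kernel_trajectory_telescoping_general T X P hP_nonneg hP_sum α r v hv0 hv_rec pT
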